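/- arXiv:1705.04586 — 8 statements merged into one kernel-verified Lean document; each statement's English description precedes it below -/
import Mathlib

section
/- Let c ∈ ℝ with c² ≠ 1, let ζ ∈ ℝ with ζ ≠ 0, and let f : ℝ → ℝ be twice differentiable with (c²−1)·f''(z) + sin(f(z)) = 0 for all z. Define A(z) = −i(4(1+c)ζ² − (c−1)cos(f(z)))/(8ζ), B(z) = (c−1)(i·sin(f(z)) + 2(c+1)ζ·f'(z))/(8ζ), C(z) = −iζ/2 + i·cos(f(z))/(8ζ), D(z) = i·sin(f(z))/(8ζ) + (c−1)·f'(z)/4. Suppose χ₁, χ₂ : ℝ × ℝ → ℂ are twice continuously differentiable in (z,τ) and satisfy ∂_z χ₁ = C χ₁ + D χ₂, ∂_z χ₂ = −conj(D) χ₁ − C χ₂, ∂_τ χ₁ = A χ₁ + B χ₂, ∂_τ χ₂ = −conj(B) χ₁ − A χ₂. Then w(z,τ) = χ₁(z,τ)² + χ₂(z,τ)² satisfies the linearized sine-Gordon equation (c²−1)·∂²_z w − 2c·∂_z∂_τ w + ∂²_τ w + cos(f(z))·w = 0. -/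
open Complex ComplexConjugate

/-!
Along a flow `(χ₁, χ₂)' = [[a, b], [-g, -a]] (χ₁, χ₂)`, the quadratic forms `w = χ₁² + χ₂²`,
`p = χ₁² - χ₂²` and `q = χ₁ χ₂` satisfy the closed linear system
`w' = 2a p + 2(b - g) q`, `p' = 2a w + 2(b + g) q`, `q' = b χ₂² - g χ₁²`.
Applying this twice along the `z`- and `τ`-flows of the Lax pair gives `w_zz`, `w_zτ` and `w_ττ`
in terms of `χ₁, χ₂` and the coefficients, where only `C`, `A`, `D - conj D = i sin f / (4ζ)`
and `B - conj B = i (c - 1) sin f / (4ζ)` are ever differentiated.  The linearized equation is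
then a polynomial identity in `χ₁, χ₂, sin f, cos f, f'` modulo `i² = -1`.
-/

section Partial

variable {𝕜 : Type*} [NontriviallyNormedField 𝕜] {E₁ E₂ G : Type*}
  [NormedAddCommGroup E₁] [NormedSpace 𝕜 E₁] [NormedAddCommGroup E₂] [NormedSpace 𝕜 E₂]
  [NormedAddCommGroup G] [NormedSpace 𝕜 G] {F : E₁ → E₂ → G}

theorem Differentiable.partial_fst (hF : Differentiable 𝕜 (fun p : E₁ × E₂ => F p.1 p.2))
    (t : E₂) : Differentiable 𝕜 (fun x => F x t) :=
  hF.comp (differentiable_id.prodMk (differentiable_const t))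

theorem Differentiable.partial_snd (hF : Differentiable 𝕜 (fun p : E₁ × E₂ => F p.1 p.2))
    (x : E₁) : Differentiable 𝕜 (fun t => F x t) :=
  hF.comp ((differentiable_const x).prodMk differentiable_id)

end Partial

/-- `ψ = (u, v)` solves `ψ' = [[a, b], [-g, -a]] ψ`; for the sine-Gordon Lax pair `g = conj b`. -/
def SolvesTracelessSystem (a b g u v : ℝ → ℂ) : Prop :=
  ∀ y, HasDerivAt u (a y * u y + b y * v y) y ∧ HasDerivAt v (-g y * u y - a y * v y) y

namespace SolvesTracelessSystem

variable {a b g u v : ℝ → ℂ}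

theorem of_deriv_eq (hu : Differentiable ℝ u) (hv : Differentiable ℝ v)
    (hu' : ∀ y, deriv u y = a y * u y + b y * v y)
    (hv' : ∀ y, deriv v y = -g y * u y - a y * v y) : SolvesTracelessSystem a b g u v :=
  fun y => ⟨hu' y ▸ (hu y).hasDerivAt, hv' y ▸ (hv y).hasDerivAt⟩

theorem hasDerivAt_sq_add_sq (h : SolvesTracelessSystem a b g u v) (x : ℝ) :
    HasDerivAt (fun y => u y ^ 2 + v y ^ 2)
      (2 * a x * (u x ^ 2 - v x ^ 2) + 2 * (b x - g x) * (u x * v x)) x := by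
  obtain ⟨hu, hv⟩ := h x
  exact ((hu.fun_pow 2).add (hv.fun_pow 2)).congr_deriv (by ring)

theorem hasDerivAt_sq_sub_sq (h : SolvesTracelessSystem a b g u v) (x : ℝ) :
    HasDerivAt (fun y => u y ^ 2 - v y ^ 2)
      (2 * a x * (u x ^ 2 + v x ^ 2) + 2 * (b x + g x) * (u x * v x)) x := by
  obtain ⟨hu, hv⟩ := h x
  exact ((hu.fun_pow 2).sub (hv.fun_pow 2)).congr_deriv (by ring)

theorem hasDerivAt_mul (h : SolvesTracelessSystem a b g u v) (x : ℝ) :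
    HasDerivAt (fun y => u y * v y) (b x * v x ^ 2 - g x * u x ^ 2) x := by
  obtain ⟨hu, hv⟩ := h x
  exact (hu.mul hv).congr_deriv (by ring)

theorem deriv_sq_add_sq (h : SolvesTracelessSystem a b g u v) :
    deriv (fun y => u y ^ 2 + v y ^ 2) =
      fun y => 2 * a y * (u y ^ 2 - v y ^ 2) + 2 * (b y - g y) * (u y * v y) :=
  funext fun y => (h.hasDerivAt_sq_add_sq y).deriv

theorem hasDerivAt_linear_combination (h : SolvesTracelessSystem a b g u v) {x : ℝ}
    {α ε : ℝ → ℂ} {α' ε' : ℂ} (hα : HasDerivAt α α' x) (hε : HasDerivAt ε ε' x) :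
    HasDerivAt (fun y => α y * (u y ^ 2 - v y ^ 2) + ε y * (u y * v y))
      (α' * (u x ^ 2 - v x ^ 2)
        + α x * (2 * a x * (u x ^ 2 + v x ^ 2) + 2 * (b x + g x) * (u x * v x))
        + (ε' * (u x * v x) + ε x * (b x * v x ^ 2 - g x * u x ^ 2))) x :=
  ((hα.mul (h.hasDerivAt_sq_sub_sq x)).add (hε.mul (h.hasDerivAt_mul x))).congr_deriv (by ring)

theorem deriv_deriv_sq_add_sq (h : SolvesTracelessSystem a b g u v) {x : ℝ} {a' e : ℂ}
    (ha : HasDerivAt a a' x) (he : HasDerivAt (fun y => b y - g y) e x) :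
    deriv (deriv fun y => u y ^ 2 + v y ^ 2) x =
      2 * a' * (u x ^ 2 - v x ^ 2)
        + 2 * a x * (2 * a x * (u x ^ 2 + v x ^ 2) + 2 * (b x + g x) * (u x * v x))
        + (2 * e * (u x * v x) + 2 * (b x - g x) * (b x * v x ^ 2 - g x * u x ^ 2)) := by
  rw [h.deriv_sq_add_sq]
  exact (h.hasDerivAt_linear_combination (ha.const_mul 2) (he.const_mul 2)).deriv

theorem deriv_deriv_sq_add_sq_mixed {u v : ℝ → ℝ → ℂ} {a b g α β γ : ℝ → ℂ} {x t : ℝ}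
    {α' e : ℂ}
    (hx : SolvesTracelessSystem a b g (u · t) (v · t))
    (ht : ∀ y, SolvesTracelessSystem (fun _ => α y) (fun _ => β y) (fun _ => γ y) (u y ·) (v y ·))
    (hα : HasDerivAt α α' x) (he : HasDerivAt (fun y => β y - γ y) e x) :
    deriv (fun y => deriv (fun s => u y s ^ 2 + v y s ^ 2) t) x =
      2 * α' * (u x t ^ 2 - v x t ^ 2)
        + 2 * α x * (2 * a x * (u x t ^ 2 + v x t ^ 2) + 2 * (b x + g x) * (u x t * v x t))
        + (2 * e * (u x t * v x t)
          + 2 * (β x - γ x) * (b x * v x t ^ 2 - g x * u x t ^ 2)) := by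
  have hτ : (fun y => deriv (fun s => u y s ^ 2 + v y s ^ 2) t) =
      fun y => 2 * α y * (u y t ^ 2 - v y t ^ 2) + 2 * (β y - γ y) * (u y t * v y t) :=
    funext fun y => ((ht y).hasDerivAt_sq_add_sq t).deriv
  rw [hτ]
  exact (hx.hasDerivAt_linear_combination (hα.const_mul 2) (he.const_mul 2)).deriv

end SolvesTracelessSystem

theorem hasDerivAt_of_eq_const_add_mul_cos {f : ℝ → ℝ} {φ : ℝ → ℂ} {x : ℝ} {κ₀ κ₁ : ℂ}
    (hf : DifferentiableAt ℝ f x) (hφ : ∀ y, φ y = κ₀ + κ₁ * Real.cos (f y)) :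
    HasDerivAt φ (κ₁ * (-Real.sin (f x) * deriv f x : ℝ)) x := by
  rw [funext hφ]
  exact (hf.hasDerivAt.cos.ofReal_comp.const_mul κ₁).const_add κ₀

theorem hasDerivAt_of_eq_mul_sin {f : ℝ → ℝ} {φ : ℝ → ℂ} {x : ℝ} {κ : ℂ}
    (hf : DifferentiableAt ℝ f x) (hφ : ∀ y, φ y = κ * Real.sin (f y)) :
    HasDerivAt φ (κ * (Real.cos (f x) * deriv f x : ℝ)) x := by
  rw [funext hφ]
  exact hf.hasDerivAt.sin.ofReal_comp.const_mul κ

theorem conj_laxCoeffD (c ζ s φ : ℝ) :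
    conj (I * s / (8 * ζ) + (c - 1) * φ / 4) = -(I * s) / (8 * ζ) + (c - 1) * φ / 4 := by
  simp only [map_add, map_div₀, map_mul, map_sub, map_one, map_ofNat, conj_I, conj_ofReal]
  ring

theorem conj_laxCoeffB (c ζ s φ : ℝ) :
    conj ((c - 1) * (I * s + 2 * (c + 1) * ζ * φ) / (8 * ζ)) =
      (c - 1) * (-(I * s) + 2 * (c + 1) * ζ * φ) / (8 * ζ) := by
  simp only [map_add, map_div₀, map_mul, map_sub, map_one, map_ofNat, conj_I, conj_ofReal]
  ring

theorem squared_eigenfunctions_solve_linearization_general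
    (c ζ : ℝ) (hζ : ζ ≠ 0)
    (f : ℝ → ℝ) (hf : Differentiable ℝ f)
    (A B C D : ℝ → ℂ)
    (hA : ∀ z : ℝ, A z = -Complex.I * (4 * (1 + (c : ℂ)) * (ζ : ℂ) ^ 2 -
      ((c : ℂ) - 1) * (Real.cos (f z) : ℂ)) / (8 * (ζ : ℂ)))
    (hB : ∀ z : ℝ, B z = ((c : ℂ) - 1) * (Complex.I * (Real.sin (f z) : ℂ) +
      2 * ((c : ℂ) + 1) * (ζ : ℂ) * ((deriv f z : ℝ) : ℂ)) / (8 * (ζ : ℂ)))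
    (hC : ∀ z : ℝ, C z = -Complex.I * (ζ : ℂ) / 2 +
      Complex.I * (Real.cos (f z) : ℂ) / (8 * (ζ : ℂ)))
    (hD : ∀ z : ℝ, D z = Complex.I * (Real.sin (f z) : ℂ) / (8 * (ζ : ℂ)) +
      ((c : ℂ) - 1) * ((deriv f z : ℝ) : ℂ) / 4)
    (χ₁ χ₂ : ℝ → ℝ → ℂ)
    (hχ₁ : ContDiff ℝ 2 (fun p : ℝ × ℝ => χ₁ p.1 p.2))
    (hχ₂ : ContDiff ℝ 2 (fun p : ℝ × ℝ => χ₂ p.1 p.2))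
    (hz1 : ∀ z τ : ℝ, deriv (fun z' => χ₁ z' τ) z = C z * χ₁ z τ + D z * χ₂ z τ)
    (hz2 : ∀ z τ : ℝ, deriv (fun z' => χ₂ z' τ) z =
      -(starRingEnd ℂ) (D z) * χ₁ z τ - C z * χ₂ z τ)
    (ht1 : ∀ z τ : ℝ, deriv (fun τ' => χ₁ z τ') τ = A z * χ₁ z τ + B z * χ₂ z τ)
    (ht2 : ∀ z τ : ℝ, deriv (fun τ' => χ₂ z τ') τ =
      -(starRingEnd ℂ) (B z) * χ₁ z τ - A z * χ₂ z τ)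
    (w : ℝ → ℝ → ℂ) (hw : ∀ z τ : ℝ, w z τ = χ₁ z τ ^ 2 + χ₂ z τ ^ 2) :
    ∀ z τ : ℝ,
      ((c : ℂ) ^ 2 - 1) * deriv (deriv (fun z' => w z' τ)) z -
        2 * (c : ℂ) * deriv (fun z' => deriv (fun τ' => w z' τ') τ) z +
        deriv (deriv (fun τ' => w z τ')) τ +
        (Real.cos (f z) : ℂ) * w z τ = 0 := by
  obtain rfl : w = fun z τ => χ₁ z τ ^ 2 + χ₂ z τ ^ 2 := funext₂ hw
  intro z τ
  have hd₁ := hχ₁.differentiable two_ne_zero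
  have hd₂ := hχ₂.differentiable two_ne_zero
  have hzsys : ∀ t, SolvesTracelessSystem C D (fun y => conj (D y)) (χ₁ · t) (χ₂ · t) := fun t =>
    .of_deriv_eq (hd₁.partial_fst t) (hd₂.partial_fst t) (hz1 · t) (hz2 · t)
  have htsys : ∀ y, SolvesTracelessSystem (fun _ => A y) (fun _ => B y) (fun _ => conj (B y))
      (χ₁ y ·) (χ₂ y ·) := fun y =>
    .of_deriv_eq (hd₁.partial_snd y) (hd₂.partial_snd y) (ht1 y) (ht2 y)
  have hDconj y :
      conj (D y) = -(I * Real.sin (f y)) / (8 * ζ) + (c - 1) * (deriv f y : ℝ) / 4 := by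
    rw [hD, conj_laxCoeffD]
  have hBconj y : conj (B y) =
      (c - 1) * (-(I * Real.sin (f y)) + 2 * (c + 1) * ζ * (deriv f y : ℝ)) / (8 * ζ) := by
    rw [hB, conj_laxCoeffB]
  have hAd := hasDerivAt_of_eq_const_add_mul_cos (φ := A) (κ₀ := -I * (1 + c) * ζ / 2)
    (κ₁ := I * (c - 1) / (8 * ζ)) (hf z) fun y => by rw [hA]; field_simp; ring
  have hCd := hasDerivAt_of_eq_const_add_mul_cos (φ := C) (κ₀ := -I * ζ / 2) (κ₁ := I / (8 * ζ))
    (hf z) fun y => by rw [hC]; ring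
  have hDd := hasDerivAt_of_eq_mul_sin (φ := fun y => D y - conj (D y)) (κ := I / (4 * ζ))
    (hf z) fun y => by rw [hDconj, hD]; ring
  have hBd := hasDerivAt_of_eq_mul_sin (φ := fun y => B y - conj (B y))
    (κ := I * (c - 1) / (4 * ζ)) (hf z) fun y => by rw [hBconj, hB]; ring
  have hζ' : (ζ : ℂ) ≠ 0 := ofReal_ne_zero.mpr hζ
  beta_reduce
  rw [(hzsys τ).deriv_deriv_sq_add_sq hCd hDd, (hzsys τ).deriv_deriv_sq_add_sq_mixed htsys hAd hBd,
    (htsys z).deriv_deriv_sq_add_sq (hasDerivAt_const _ _) (hasDerivAt_const _ _),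
    hDconj, hBconj, hA, hB, hC, hD]
  push_cast
  field_simp
  ring_nf
  simp only [I_sq]
  ring

/-- Squared-eigenfunction connection: if `(χ₁, χ₂)` solves both parts of the traveling-frame
sine-Gordon Lax pair at spectral parameter `ζ`, then `w = χ₁² + χ₂²` solves the linearized
sine-Gordon equation `(c²−1)w_zz − 2c w_zτ + w_ττ + cos(f(z))w = 0`. -/
theorem squared_eigenfunctions_solve_linearization
    (c ζ : ℝ) (hc : c ^ 2 ≠ 1) (hζ : ζ ≠ 0)
    (f : ℝ → ℝ) (hf : Differentiable ℝ f) (hf' : Differentiable ℝ (deriv f))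
    (hode : ∀ z : ℝ, (c ^ 2 - 1) * deriv (deriv f) z + Real.sin (f z) = 0)
    (A B C D : ℝ → ℂ)
    (hA : ∀ z : ℝ, A z = -Complex.I * (4 * (1 + (c : ℂ)) * (ζ : ℂ) ^ 2 -
      ((c : ℂ) - 1) * (Real.cos (f z) : ℂ)) / (8 * (ζ : ℂ)))
    (hB : ∀ z : ℝ, B z = ((c : ℂ) - 1) * (Complex.I * (Real.sin (f z) : ℂ) +
      2 * ((c : ℂ) + 1) * (ζ : ℂ) * ((deriv f z : ℝ) : ℂ)) / (8 * (ζ : ℂ)))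
    (hC : ∀ z : ℝ, C z = -Complex.I * (ζ : ℂ) / 2 +
      Complex.I * (Real.cos (f z) : ℂ) / (8 * (ζ : ℂ)))
    (hD : ∀ z : ℝ, D z = Complex.I * (Real.sin (f z) : ℂ) / (8 * (ζ : ℂ)) +
      ((c : ℂ) - 1) * ((deriv f z : ℝ) : ℂ) / 4)
    (χ₁ χ₂ : ℝ → ℝ → ℂ)
    (hχ₁ : ContDiff ℝ 2 (fun p : ℝ × ℝ => χ₁ p.1 p.2))
    (hχ₂ : ContDiff ℝ 2 (fun p : ℝ × ℝ => χ₂ p.1 p.2))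
    (hz1 : ∀ z τ : ℝ, deriv (fun z' => χ₁ z' τ) z = C z * χ₁ z τ + D z * χ₂ z τ)
    (hz2 : ∀ z τ : ℝ, deriv (fun z' => χ₂ z' τ) z =
      -(starRingEnd ℂ) (D z) * χ₁ z τ - C z * χ₂ z τ)
    (ht1 : ∀ z τ : ℝ, deriv (fun τ' => χ₁ z τ') τ = A z * χ₁ z τ + B z * χ₂ z τ)
    (ht2 : ∀ z τ : ℝ, deriv (fun τ' => χ₂ z τ') τ =
      -(starRingEnd ℂ) (B z) * χ₁ z τ - A z * χ₂ z τ)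
    (w : ℝ → ℝ → ℂ) (hw : ∀ z τ : ℝ, w z τ = χ₁ z τ ^ 2 + χ₂ z τ ^ 2) :
    ∀ z τ : ℝ,
      ((c : ℂ) ^ 2 - 1) * deriv (deriv (fun z' => w z' τ)) z -
        2 * (c : ℂ) * deriv (fun z' => deriv (fun τ' => w z' τ') τ) z +
        deriv (deriv (fun τ' => w z τ')) τ +
        (Real.cos (f z) : ℂ) * w z τ = 0 :=
  squared_eigenfunctions_solve_linearization_general c ζ hζ f hf A B C D hA hB hC hD χ₁ χ₂ hχ₁ hχ₂
    hz1 hz2 ht1 ht2 w hw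
end

section
/- Let U ⊆ ℂ be open, f : ℂ → ℂ holomorphic on U, and let γ : (a,b) → U be continuously differentiable with γ'(t) ≠ 0 and (deriv f)(γ(t)) ≠ 0 for all t ∈ (a,b). If the function t ↦ Re(f(γ(t))) is constant on (a,b), then the function t ↦ Im(f(γ(t))) is strictly monotone on (a,b). -/
/-!
With `g = f ∘ γ`, the velocity `g' = f'(γ) γ'` never vanishes, and constancy of `Re g` forces
`Re g' = 0`; hence `(Im g)' = Im g'` never vanishes, and by Darboux's theorem it has constant
sign on the interval.
-/

open Set Filter Topology

theorem strictMonoOn_or_strictAntiOn_of_hasDerivAt_ne_zero {s : Set ℝ} (hs : IsOpen s)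
    (hs' : Convex ℝ s) {f f' : ℝ → ℝ} (hf : ∀ x ∈ s, HasDerivAt f (f' x) x)
    (hf' : ∀ x ∈ s, f' x ≠ 0) : StrictMonoOn f s ∨ StrictAntiOn f s := by
  have hcont : ContinuousOn f s := fun x hx => (hf x hx).continuousAt.continuousWithinAt
  have hderiv : ∀ x ∈ interior s, HasDerivWithinAt f (f' x) (interior s) x := fun x hx =>
    (hf x (interior_subset hx)).hasDerivWithinAt
  rw [← hs.interior_eq] at hf'
  rcases hasDerivWithinAt_forall_lt_or_forall_gt_of_forall_ne (hs'.interior) hderiv hf' with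
    hneg | hpos
  · exact .inr (strictAntiOn_of_hasDerivWithinAt_neg hs' hcont hderiv hneg)
  · exact .inl (strictMonoOn_of_hasDerivWithinAt_pos hs' hcont hderiv hpos)

theorem HasDerivAt.re_eq_zero_of_eventually_re_eq {g : ℝ → ℂ} {g' : ℂ} {t : ℝ}
    (hg : HasDerivAt g g' t) (hre : ∀ᶠ s in 𝓝 t, (g s).re = (g t).re) : g'.re = 0 :=
  (Complex.reCLM.hasFDerivAt.comp_hasDerivAt t hg).unique
    ((hasDerivAt_const t (g t).re).congr_of_eventuallyEq hre)

theorem strictMonoOn_or_strictAntiOn_im_of_re_const {s : Set ℝ} (hs : IsOpen s)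
    (hs' : Convex ℝ s) {g g' : ℝ → ℂ} (hg : ∀ t ∈ s, HasDerivAt g (g' t) t)
    (hg' : ∀ t ∈ s, g' t ≠ 0) (hre : ∀ t₁ ∈ s, ∀ t₂ ∈ s, (g t₁).re = (g t₂).re) :
    StrictMonoOn (fun t => (g t).im) s ∨ StrictAntiOn (fun t => (g t).im) s := by
  refine strictMonoOn_or_strictAntiOn_of_hasDerivAt_ne_zero hs hs'
    (fun t ht => Complex.imCLM.hasFDerivAt.comp_hasDerivAt t (hg t ht)) fun t ht him => ?_
  have hre' : (g' t).re = 0 := (hg t ht).re_eq_zero_of_eventually_re_eq <|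
    eventually_of_mem (hs.mem_nhds ht) fun u hu => hre u hu t ht
  exact hg' t ht (Complex.ext hre' him)

theorem im_strictMono_of_re_const_along_contour_general
    (U : Set ℂ) (hU : IsOpen U) (f : ℂ → ℂ) (hf : DifferentiableOn ℂ f U)
    (a b : ℝ) (γ γ' : ℝ → ℂ)
    (hγmem : ∀ t ∈ Set.Ioo a b, γ t ∈ U)
    (hγderiv : ∀ t ∈ Set.Ioo a b, HasDerivAt γ (γ' t) t)
    (hγ'ne : ∀ t ∈ Set.Ioo a b, γ' t ≠ 0)
    (hfderiv_ne : ∀ t ∈ Set.Ioo a b, deriv f (γ t) ≠ 0)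
    (hre_const : ∀ s ∈ Set.Ioo a b, ∀ t ∈ Set.Ioo a b, (f (γ s)).re = (f (γ t)).re) :
    StrictMonoOn (fun t => (f (γ t)).im) (Set.Ioo a b) ∨
      StrictAntiOn (fun t => (f (γ t)).im) (Set.Ioo a b) := by
  have hderiv : ∀ t ∈ Ioo a b, HasDerivAt (f ∘ γ) (deriv f (γ t) * γ' t) t := fun t ht =>
    ((hf.differentiableAt (hU.mem_nhds (hγmem t ht))).hasDerivAt).comp t (hγderiv t ht)
  exact strictMonoOn_or_strictAntiOn_im_of_re_const isOpen_Ioo (convex_Ioo a b) hderiv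
    (fun t ht => mul_ne_zero (hfderiv_ne t ht) (hγ'ne t ht)) hre_const

/-- Along a C¹ regular contour avoiding critical points of a holomorphic function `f`,
if `Re ∘ f ∘ γ` is constant then `Im ∘ f ∘ γ` is strictly monotone. -/
theorem im_strictMono_of_re_const_along_contour
    (U : Set ℂ) (hU : IsOpen U) (f : ℂ → ℂ) (hf : DifferentiableOn ℂ f U)
    (a b : ℝ) (γ γ' : ℝ → ℂ)
    (hγmem : ∀ t ∈ Set.Ioo a b, γ t ∈ U)
    (hγderiv : ∀ t ∈ Set.Ioo a b, HasDerivAt γ (γ' t) t)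
    (hγ'cont : ContinuousOn γ' (Set.Ioo a b))
    (hγ'ne : ∀ t ∈ Set.Ioo a b, γ' t ≠ 0)
    (hfderiv_ne : ∀ t ∈ Set.Ioo a b, deriv f (γ t) ≠ 0)
    (hre_const : ∀ s ∈ Set.Ioo a b, ∀ t ∈ Set.Ioo a b, (f (γ s)).re = (f (γ t)).re) :
    StrictMonoOn (fun t => (f (γ t)).im) (Set.Ioo a b) ∨
      StrictAntiOn (fun t => (f (γ t)).im) (Set.Ioo a b) :=
  im_strictMono_of_re_const_along_contour_general U hU f hf a b γ γ' hγmem hγderiv hγ'ne hfderiv_ne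
    hre_const
end

section
/- Let c ∈ ℝ, ζ ∈ ℝ with ζ ≠ 0, and let f : ℝ → ℝ be twice differentiable satisfying (c²−1)·f''(z) + sin(f(z)) = 0 for all z. Define the 2×2 complex matrices M(z) with rows [C(z), D(z)] and [−conj(D(z)), −C(z)], and N(z) with rows [A(z), B(z)] and [−conj(B(z)), −A(z)], where A(z) = −i(4(1+c)ζ² − (c−1)cos(f(z)))/(8ζ), B(z) = (c−1)(i·sin(f(z)) + 2(c+1)ζ·f'(z))/(8ζ), C(z) = −iζ/2 + i·cos(f(z))/(8ζ), D(z) = i·sin(f(z))/(8ζ) + (c−1)·f'(z)/4. Then the zero-curvature (compatibility) condition N'(z) = M(z)·N(z) − N(z)·M(z) holds for all z ∈ ℝ. -/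
/-
Both Lax matrices have the shape `[[a, b], [-b̄, -a]]` with `a` purely imaginary, and the
commutator of `[[c, d], [-d̄, -c]]` with `[[a, b], [-b̄, -a]]` again has this shape, with first
row `b d̄ - d b̄`, `2 (c b - a d)`.
So `N' = [M, N]` reduces to two scalar identities between the coefficients: the diagonal one is
a polynomial identity in `sin f` and `f'`, and only the off-diagonal one, which involves `f''`
through `B'`, needs the pendulum equation.
-/

open Complex ComplexConjugate

namespace SineGordon

def laxMatrix (a b : ℂ) : Matrix (Fin 2) (Fin 2) ℂ := !![a, b; -conj b, -a]

theorem laxMatrix_mul_sub_mul {a b c d : ℂ} (ha : conj a = -a) (hc : conj c = -c) :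
    laxMatrix c d * laxMatrix a b - laxMatrix a b * laxMatrix c d =
      laxMatrix (b * conj d - d * conj b) (2 * (c * b - a * d)) := by
  ext i j
  fin_cases i <;> fin_cases j <;>
    simp [laxMatrix, ha, hc, map_ofNat] <;> ring

theorem hasDerivAt_laxMatrix_apply {a b : ℝ → ℂ} {a' b' : ℂ} {z : ℝ}
    (ha : HasDerivAt a a' z) (hb : HasDerivAt b b' z) (i j : Fin 2) :
    HasDerivAt (fun z => laxMatrix (a z) (b z) i j) (laxMatrix a' b' i j) z := by
  have hb_conj : HasDerivAt (fun z => conj (b z)) (conj b') z := hb.star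
  fin_cases i <;> fin_cases j
  exacts [ha, hb, hb_conj.neg, ha.neg]

variable (c ζ : ℝ)

noncomputable def coeffA (co : ℝ) : ℂ :=
  -I * (4 * (1 + (c : ℂ)) * (ζ : ℂ) ^ 2 - ((c : ℂ) - 1) * (co : ℂ)) / (8 * (ζ : ℂ))

noncomputable def coeffB (s p : ℝ) : ℂ :=
  ((c : ℂ) - 1) * (I * (s : ℂ) + 2 * ((c : ℂ) + 1) * (ζ : ℂ) * (p : ℂ)) / (8 * (ζ : ℂ))

noncomputable def coeffC (co : ℝ) : ℂ :=
  -I * (ζ : ℂ) / 2 + I * (co : ℂ) / (8 * (ζ : ℂ))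

noncomputable def coeffD (s p : ℝ) : ℂ :=
  I * (s : ℂ) / (8 * (ζ : ℂ)) + ((c : ℂ) - 1) * (p : ℂ) / 4

theorem conj_coeffA (co : ℝ) : conj (coeffA c ζ co) = -coeffA c ζ co := by
  simp only [coeffA, neg_mul, map_div₀, map_neg, map_mul, conj_I, map_sub, map_ofNat, map_add,
    map_one, conj_ofReal, map_pow]
  ring

theorem conj_coeffC (co : ℝ) : conj (coeffC ζ co) = -coeffC ζ co := by
  simp only [coeffC, neg_mul, map_add, map_div₀, map_neg, map_mul, conj_I, conj_ofReal,
    map_ofNat, neg_add_rev]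
  ring

theorem hasDerivAt_coeffA {u : ℝ → ℝ} {u' z : ℝ} (hu : HasDerivAt u u' z) :
    HasDerivAt (fun z => coeffA c ζ (u z)) (I * ((c : ℂ) - 1) * (u' : ℂ) / (8 * (ζ : ℂ))) z := by
  refine ((((hu.ofReal_comp.const_mul ((c : ℂ) - 1)).const_sub
    (4 * (1 + (c : ℂ)) * (ζ : ℂ) ^ 2)).const_mul (-I)).div_const (8 * (ζ : ℂ))).congr_deriv ?_
  ring

theorem hasDerivAt_coeffB {s p : ℝ → ℝ} {s' p' z : ℝ} (hs : HasDerivAt s s' z)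
    (hp : HasDerivAt p p' z) :
    HasDerivAt (fun z => coeffB c ζ (s z) (p z)) (coeffB c ζ s' p') z :=
  (((hs.ofReal_comp.const_mul I).add (hp.ofReal_comp.const_mul
    (2 * ((c : ℂ) + 1) * (ζ : ℂ)))).const_mul ((c : ℂ) - 1)).div_const (8 * (ζ : ℂ))

theorem laxMatrix_coeff_commutator (hζ : ζ ≠ 0) {s co p q : ℝ}
    (hode : (c ^ 2 - 1) * q + s = 0) :
    laxMatrix (coeffC ζ co) (coeffD c ζ s p) * laxMatrix (coeffA c ζ co) (coeffB c ζ s p) -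
        laxMatrix (coeffA c ζ co) (coeffB c ζ s p) * laxMatrix (coeffC ζ co) (coeffD c ζ s p) =
      laxMatrix (I * ((c : ℂ) - 1) * ((-s * p : ℝ) : ℂ) / (8 * (ζ : ℂ)))
        (coeffB c ζ (co * p) q) := by
  have hζ' : (ζ : ℂ) ≠ 0 := ofReal_ne_zero.mpr hζ
  have hodeC : ((c : ℂ) ^ 2 - 1) * q + s = 0 := by exact_mod_cast hode
  rw [laxMatrix_mul_sub_mul (conj_coeffA c ζ co) (conj_coeffC ζ co)]
  congr 1
  · simp only [coeffB, coeffD, map_add, map_div₀, map_mul, conj_I, conj_ofReal, neg_mul, map_ofNat,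
      map_sub, map_one, ofReal_neg, ofReal_mul]
    field_simp
    ring
  · simp only [coeffA, coeffB, coeffC, coeffD]
    push_cast
    field_simp
    linear_combination -64 * (ζ : ℂ) ^ 2 * hodeC + 64 * (ζ : ℂ) ^ 2 * s * I_sq

end SineGordon

open SineGordon in
/-- Zero-curvature (compatibility) condition for the traveling-frame sine-Gordon Lax pair:
with `χ_z = M(z)χ`, `χ_τ = N(z)χ`, one has `N'(z) = M(z)N(z) − N(z)M(z)` along any
stationary solution `f` of the pendulum equation `(c²−1)f'' + sin f = 0`. -/
theorem lax_pair_zero_curvature_stationary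
    (c ζ : ℝ) (hζ : ζ ≠ 0)
    (f : ℝ → ℝ) (hf : Differentiable ℝ f) (hf' : Differentiable ℝ (deriv f))
    (hode : ∀ z : ℝ, (c ^ 2 - 1) * deriv (deriv f) z + Real.sin (f z) = 0)
    (A B C D : ℝ → ℂ)
    (hA : ∀ z : ℝ, A z = -Complex.I * (4 * (1 + (c : ℂ)) * (ζ : ℂ) ^ 2 -
      ((c : ℂ) - 1) * (Real.cos (f z) : ℂ)) / (8 * (ζ : ℂ)))
    (hB : ∀ z : ℝ, B z = ((c : ℂ) - 1) * (Complex.I * (Real.sin (f z) : ℂ) +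
      2 * ((c : ℂ) + 1) * (ζ : ℂ) * ((deriv f z : ℝ) : ℂ)) / (8 * (ζ : ℂ)))
    (hC : ∀ z : ℝ, C z = -Complex.I * (ζ : ℂ) / 2 +
      Complex.I * (Real.cos (f z) : ℂ) / (8 * (ζ : ℂ)))
    (hD : ∀ z : ℝ, D z = Complex.I * (Real.sin (f z) : ℂ) / (8 * (ζ : ℂ)) +
      ((c : ℂ) - 1) * ((deriv f z : ℝ) : ℂ) / 4)
    (M N : ℝ → Matrix (Fin 2) (Fin 2) ℂ)
    (hM : ∀ z : ℝ, M z = !![C z, D z; -(starRingEnd ℂ) (D z), -C z])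
    (hN : ∀ z : ℝ, N z = !![A z, B z; -(starRingEnd ℂ) (B z), -A z]) :
    ∀ z : ℝ, ∀ i j : Fin 2,
      HasDerivAt (fun z' => N z' i j) ((M z * N z - N z * M z) i j) z := by
  intro z i j
  have hN_lax : ∀ z, N z = laxMatrix (coeffA c ζ (Real.cos (f z)))
      (coeffB c ζ (Real.sin (f z)) (deriv f z)) := fun z => by rw [hN, hA, hB]; rfl
  have hM_lax : M z = laxMatrix (coeffC ζ (Real.cos (f z)))
      (coeffD c ζ (Real.sin (f z)) (deriv f z)) := by rw [hM, hC, hD]; rfl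
  have hf_z := (hf z).hasDerivAt
  rw [hM_lax, hN_lax, laxMatrix_coeff_commutator c ζ hζ (hode z)]
  simp only [hN_lax]
  exact hasDerivAt_laxMatrix_apply (hasDerivAt_coeffA c ζ hf_z.cos)
    (hasDerivAt_coeffB c ζ hf_z.sin (hf' z).hasDerivAt) i j
end

section
/- Let c, E ∈ ℝ, let ζ ∈ ℝ with ζ ≠ 0, and let F, P ∈ ℝ satisfy the energy relation (1/2)(c²−1)P² + 1 − cos F = E. Define A = −i(4(1+c)ζ² − (c−1)cos F)/(8ζ) and B = (c−1)(i·sin F + 2(c+1)ζ·P)/(8ζ). Then A² − B·conj(B) = (1/64)·(−8(c²−1)(E−1) − (c−1)²/ζ² − 16(c+1)²ζ²). In particular, along any stationary solution f(z) with energy E, the quantity Ω² = A² − B·conj(B) is independent of z. -/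
open Complex

/-!
With `a = 4(1+c)ζ² − (c−1)cos F` real, `A = −i·a/(8ζ)` gives `A² = −a²/(64ζ²)`, and
`B·conj B = |B|² = (c−1)²(sin²F + 4(c+1)²ζ²P²)/(64ζ²)`. The energy relation replaces
`(c²−1)P²` by `2(E − 1 + cos F)`; the resulting `cos F` terms cancel against the cross term
of `a²`, and `sin²F + cos²F = 1` removes the rest of the dependence on `F`.
-/

theorem neg_I_mul_ofReal_div_ofReal_sq (a d : ℝ) :
    (-I * a / d : ℂ) ^ 2 = ((-(a ^ 2 / d ^ 2) : ℝ) : ℂ) := by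
  push_cast
  rw [div_pow, mul_pow, neg_sq, I_sq]
  ring

theorem normSq_ofReal_mul_add_mul_I_div (r x y d : ℝ) :
    normSq (r * (x + y * I) / d) = r ^ 2 * (x ^ 2 + y ^ 2) / d ^ 2 := by
  rw [map_div₀, map_mul, normSq_ofReal, normSq_ofReal, normSq_add_mul_I]
  ring

theorem sineGordon_lax_energy_identity (c E ζ F P : ℝ)
    (henergy : (1 / 2 : ℝ) * (c ^ 2 - 1) * P ^ 2 + 1 - Real.cos F = E) :
    (4 * (1 + c) * ζ ^ 2 - (c - 1) * Real.cos F) ^ 2 +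
        (c - 1) ^ 2 * ((2 * (c + 1) * ζ * P) ^ 2 + Real.sin F ^ 2) =
      16 * (c + 1) ^ 2 * ζ ^ 4 + 8 * (c ^ 2 - 1) * (E - 1) * ζ ^ 2 + (c - 1) ^ 2 := by
  linear_combination (c - 1) ^ 2 * Real.sin_sq_add_cos_sq F + 8 * (c ^ 2 - 1) * ζ ^ 2 * henergy

/-- For `F, P` satisfying the energy relation `(1/2)(c²−1)P² + 1 − cos F = E`, the
determinant quantity `A² − B·conj(B)` from the τ-part of the sine-Gordon Lax pair
equals `(1/64)(−8(c²−1)(E−1) − (c−1)²/ζ² − 16(c+1)²ζ²)`. -/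
theorem lax_determinant_identity (c E ζ F P : ℝ) (hζ : ζ ≠ 0)
    (henergy : (1 / 2 : ℝ) * (c ^ 2 - 1) * P ^ 2 + 1 - Real.cos F = E)
    (A B : ℂ)
    (hA : A = -Complex.I * (4 * (1 + (c : ℂ)) * (ζ : ℂ) ^ 2 - ((c : ℂ) - 1) * Real.cos F) /
      (8 * (ζ : ℂ)))
    (hB : B = ((c : ℂ) - 1) * (Complex.I * Real.sin F + 2 * ((c : ℂ) + 1) * (ζ : ℂ) * (P : ℂ)) /
      (8 * (ζ : ℂ))) :
    A ^ 2 - B * (starRingEnd ℂ) B =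
      (1 / 64 : ℂ) * (-8 * ((c : ℂ) ^ 2 - 1) * ((E : ℂ) - 1) - ((c : ℂ) - 1) ^ 2 / (ζ : ℂ) ^ 2 -
        16 * ((c : ℂ) + 1) ^ 2 * (ζ : ℂ) ^ 2) := by
  have hA' :
      A = -I * ((4 * (1 + c) * ζ ^ 2 - (c - 1) * Real.cos F : ℝ) : ℂ) / ((8 * ζ : ℝ) : ℂ) := by
    rw [hA]; push_cast; ring
  have hB' : B = ((c - 1 : ℝ) : ℂ) *
      (((2 * (c + 1) * ζ * P : ℝ) : ℂ) + (Real.sin F : ℂ) * I) / ((8 * ζ : ℝ) : ℂ) := by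
    rw [hB]; push_cast; ring
  have hdet_real : -((4 * (1 + c) * ζ ^ 2 - (c - 1) * Real.cos F) ^ 2 / (8 * ζ) ^ 2) -
        (c - 1) ^ 2 * ((2 * (c + 1) * ζ * P) ^ 2 + Real.sin F ^ 2) / (8 * ζ) ^ 2 =
      1 / 64 * (-8 * (c ^ 2 - 1) * (E - 1) - (c - 1) ^ 2 / ζ ^ 2 - 16 * (c + 1) ^ 2 * ζ ^ 2) := by
    field_simp
    linear_combination -64 * sineGordon_lax_energy_identity c E ζ F P henergy
  rw [hA', neg_I_mul_ofReal_div_ofReal_sq, hB', mul_conj, normSq_ofReal_mul_add_mul_I_div]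
  have := congrArg ((↑) : ℝ → ℂ) hdet_real
  push_cast at this ⊢
  exact this
end

section
/- Let c, E ∈ ℝ and define Ω²(ζ) = (1/64)·(−8(c²−1)(E−1) − (c−1)²/ζ² − 16(c+1)²ζ²) for ζ ≠ 0. Then for every real ζ ≠ 0 one has the identity Ω²(ζ) = −(1/64)·((−4(1+c)ζ + (c−1)/ζ)² + 8E(c²−1)). Consequently, if c² > 1 and E ≥ 0 (the superluminal case), then Ω²(ζ) ≤ 0 for all real ζ ≠ 0. -/
theorem one_div_sixtyfour_mul_eq_neg_completed_square {K : Type*} [Field K] (c E ζ : K)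
    (hζ : ζ ≠ 0) :
    (1 / 64) * (-8 * (c ^ 2 - 1) * (E - 1) - (c - 1) ^ 2 / ζ ^ 2 - 16 * (c + 1) ^ 2 * ζ ^ 2) =
      -(1 / 64) * ((-4 * (1 + c) * ζ + (c - 1) / ζ) ^ 2 + 8 * E * (c ^ 2 - 1)) := by
  field_simp
  ring

/-- For real `ζ ≠ 0`, `Ω²(ζ) = −(1/64)((−4(1+c)ζ + (c−1)/ζ)² + 8E(c²−1))`; hence in the
superluminal case `c² > 1`, `E ≥ 0`, one has `Ω²(ζ) ≤ 0` for all real `ζ ≠ 0`. -/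
theorem omega_sq_identity_superluminal (c E : ℝ) (Omega2 : ℝ → ℝ)
    (hOmega2 : ∀ ζ : ℝ, ζ ≠ 0 → Omega2 ζ =
      (1 / 64) * (-8 * (c ^ 2 - 1) * (E - 1) - (c - 1) ^ 2 / ζ ^ 2 - 16 * (c + 1) ^ 2 * ζ ^ 2)) :
    (∀ ζ : ℝ, ζ ≠ 0 → Omega2 ζ =
      -(1 / 64) * ((-4 * (1 + c) * ζ + (c - 1) / ζ) ^ 2 + 8 * E * (c ^ 2 - 1))) ∧
    (c ^ 2 > 1 → E ≥ 0 → ∀ ζ : ℝ, ζ ≠ 0 → Omega2 ζ ≤ 0) := by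
  have identity : ∀ ζ : ℝ, ζ ≠ 0 → Omega2 ζ =
      -(1 / 64) * ((-4 * (1 + c) * ζ + (c - 1) / ζ) ^ 2 + 8 * E * (c ^ 2 - 1)) := fun ζ hζ =>
    (hOmega2 ζ hζ).trans (one_div_sixtyfour_mul_eq_neg_completed_square c E ζ hζ)
  refine ⟨identity, fun hc hE ζ hζ => ?_⟩
  have hconst : 0 ≤ 8 * E * (c ^ 2 - 1) := mul_nonneg (by positivity) (by linarith)
  rw [identity ζ hζ]
  linarith [sq_nonneg (-4 * (1 + c) * ζ + (c - 1) / ζ)]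
end

section
/- Let c, E ∈ ℝ with −1 < c < 1 and E < 0 (subluminal rotational case). Define Ω²(ζ) = (1/64)·(−8(c²−1)(E−1) − (c−1)²/ζ² − 16(c+1)²ζ²) for ζ ∈ ℂ, ζ ≠ 0. Then the set {ζ ∈ ℂ : ζ ≠ 0 and Ω²(ζ) = 0} consists of exactly the four purely imaginary numbers ± i·(sqrt(1−c²)/(2·sqrt(2)·(c+1)))·(sqrt(−E) + sqrt(2−E)) and ± i·(sqrt(1−c²)/(2·sqrt(2)·(c+1)))·(sqrt(2−E) − sqrt(−E)). -/
open Complex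

/-!
Multiplying `Ω²(ζ) = 0` by `ζ²` gives a quadratic in `ζ²`. With
`a, b = √(1−c²)/(2√2(c+1)) · (√(2−E) ± √(−E))` one checks `16(c+1)²(a² + b²) = 8(1−c²)(1−E)` and
`4(c+1)ab = 1−c`, so by Vieta this quadratic is `16(c+1)² (ζ² + a²)(ζ² + b²)`, whose roots are
`±ia` and `±ib`.
-/

noncomputable def omegaSq (c E : ℝ) (ζ : ℂ) : ℂ :=
  (1 / 64 : ℂ) * (-8 * ((c : ℂ) ^ 2 - 1) * ((E : ℂ) - 1) - ((c : ℂ) - 1) ^ 2 / ζ ^ 2 -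
    16 * ((c : ℂ) + 1) ^ 2 * ζ ^ 2)

theorem omegaSq_eq_mul {c E a b : ℝ}
    (hsum : 16 * (c + 1) ^ 2 * (a ^ 2 + b ^ 2) = 8 * (1 - c ^ 2) * (1 - E))
    (hprod : 4 * (c + 1) * (a * b) = 1 - c) {ζ : ℂ} (hζ : ζ ≠ 0) :
    omegaSq c E ζ =
      -(((c : ℂ) + 1) ^ 2 / (4 * ζ ^ 2)) * ((ζ ^ 2 - (I * a) ^ 2) * (ζ ^ 2 - (I * b) ^ 2)) := by
  have hsum' := congrArg ((↑) : ℝ → ℂ) hsum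
  have hprod' := congrArg ((↑) : ℝ → ℂ) hprod
  push_cast at hsum' hprod'
  unfold omegaSq
  simp only [mul_pow, I_sq]
  field_simp
  linear_combination (4 * ζ ^ 2) * hsum' + (4 * (4 * ((c : ℂ) + 1) * (a * b) + (1 - c))) * hprod'

theorem setOf_ne_zero_and_sq_sub_sq_mul_sq_sub_sq_eq_zero {K : Type*} [Field K] {u v : K}
    (hu : u ≠ 0) (hv : v ≠ 0) :
    {ζ : K | ζ ≠ 0 ∧ (ζ ^ 2 - u ^ 2) * (ζ ^ 2 - v ^ 2) = 0} = {u, -u, v, -v} := by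
  ext ζ
  simp only [Set.mem_ofPred_eq, Set.mem_insert_iff, Set.mem_singleton_iff, mul_eq_zero,
    sub_eq_zero, sq_eq_sq_iff_eq_or_eq_neg]
  constructor
  · rintro ⟨-, h⟩
    tauto
  · rintro (rfl | rfl | rfl | rfl) <;> simp_all

theorem setOf_ne_zero_and_omegaSq_eq_zero {c E a b : ℝ}
    (hsum : 16 * (c + 1) ^ 2 * (a ^ 2 + b ^ 2) = 8 * (1 - c ^ 2) * (1 - E))
    (hprod : 4 * (c + 1) * (a * b) = 1 - c) :
    {ζ : ℂ | ζ ≠ 0 ∧ omegaSq c E ζ = 0} =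
      {ζ : ℂ | ζ ≠ 0 ∧ (ζ ^ 2 - (I * a) ^ 2) * (ζ ^ 2 - (I * b) ^ 2) = 0} := by
  have hc : (c : ℂ) + 1 ≠ 0 := by
    norm_cast
    rintro hc
    rw [hc] at hprod
    norm_num at hprod
    linarith
  ext ζ
  refine and_congr_right fun hζ => ?_
  rw [omegaSq_eq_mul hsum hprod hζ, mul_eq_zero, or_iff_right]
  exact neg_ne_zero.2 <|
    div_ne_zero (pow_ne_zero 2 hc) (mul_ne_zero (by norm_num) (pow_ne_zero 2 hζ))

theorem eight_mul_sqrt_one_sub_sq_div_sq {c : ℝ} (hc1 : -1 < c) (hc2 : c < 1) :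
    8 * (c + 1) * (Real.sqrt (1 - c ^ 2) / (2 * Real.sqrt 2 * (c + 1))) ^ 2 = 1 - c := by
  have hc : c + 1 ≠ 0 := by linarith
  rw [div_pow, mul_pow, mul_pow, Real.sq_sqrt (by nlinarith), Real.sq_sqrt zero_le_two]
  field_simp
  ring

/-- Subluminal rotational case `−1 < c < 1`, `E < 0`: the nonzero complex zeros of `Ω²` are
exactly the four purely imaginary numbers
`±i·(sqrt(1−c²)/(2√2(c+1)))(sqrt(−E) ± sqrt(2−E))`. -/
theorem omega_sq_zeros_subluminal_rotational (c E : ℝ) (hc1 : -1 < c) (hc2 : c < 1)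
    (hE : E < 0) :
    {ζ : ℂ | ζ ≠ 0 ∧
        (1 / 64 : ℂ) * (-8 * ((c : ℂ) ^ 2 - 1) * ((E : ℂ) - 1) - ((c : ℂ) - 1) ^ 2 / ζ ^ 2 -
          16 * ((c : ℂ) + 1) ^ 2 * ζ ^ 2) = 0} =
      {Complex.I * ((Real.sqrt (1 - c ^ 2) / (2 * Real.sqrt 2 * (c + 1))) *
          (Real.sqrt (-E) + Real.sqrt (2 - E)) : ℝ),
       -(Complex.I * ((Real.sqrt (1 - c ^ 2) / (2 * Real.sqrt 2 * (c + 1))) *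
          (Real.sqrt (-E) + Real.sqrt (2 - E)) : ℝ)),
       Complex.I * ((Real.sqrt (1 - c ^ 2) / (2 * Real.sqrt 2 * (c + 1))) *
          (Real.sqrt (2 - E) - Real.sqrt (-E)) : ℝ),
       -(Complex.I * ((Real.sqrt (1 - c ^ 2) / (2 * Real.sqrt 2 * (c + 1))) *
          (Real.sqrt (2 - E) - Real.sqrt (-E)) : ℝ))} := by
  have hc : 0 < c + 1 := by linarith
  set s := Real.sqrt (1 - c ^ 2) / (2 * Real.sqrt 2 * (c + 1))
  set p := Real.sqrt (-E)
  set q := Real.sqrt (2 - E)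
  have hs : 8 * (c + 1) * s ^ 2 = 1 - c := eight_mul_sqrt_one_sub_sq_div_sq hc1 hc2
  have hs_pos : 0 < s := div_pos (Real.sqrt_pos.2 (by nlinarith)) (by positivity)
  have hp : p ^ 2 = -E := Real.sq_sqrt (by linarith)
  have hq : q ^ 2 = 2 - E := Real.sq_sqrt (by linarith)
  have hp_nonneg : 0 ≤ p := Real.sqrt_nonneg _
  have hpq : p < q := Real.sqrt_lt_sqrt (by linarith) (by linarith)
  have hsum : 16 * (c + 1) ^ 2 * ((s * (p + q)) ^ 2 + (s * (q - p)) ^ 2) =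
      8 * (1 - c ^ 2) * (1 - E) := by
    linear_combination (4 * (c + 1) * (p ^ 2 + q ^ 2)) * hs +
      (4 * (c + 1) * (1 - c)) * (hp + hq)
  have hprod : 4 * (c + 1) * ((s * (p + q)) * (s * (q - p))) = 1 - c := by
    linear_combination (q ^ 2 - p ^ 2) / 2 * hs + (1 - c) / 2 * (hq - hp)
  have hu : I * ((s * (p + q) : ℝ) : ℂ) ≠ 0 :=
    mul_ne_zero I_ne_zero (ofReal_ne_zero.2 (mul_pos hs_pos (by linarith)).ne')
  have hv : I * ((s * (q - p) : ℝ) : ℂ) ≠ 0 :=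
    mul_ne_zero I_ne_zero (ofReal_ne_zero.2 (mul_pos hs_pos (sub_pos.2 hpq)).ne')
  rw [← setOf_ne_zero_and_sq_sub_sq_mul_sq_sub_sq_eq_zero hu hv]
  exact setOf_ne_zero_and_omegaSq_eq_zero hsum hprod
end

section
/- Let c, E ∈ ℝ with −1 < c < 1 and E < 0 (subluminal rotational case). Define Ω²(iy) = (1/64)·(−8(c²−1)(E−1) + (c−1)²/y² + 16(c+1)²y²) for real y ≠ 0. Then {y ∈ ℝ : y > 0 and Ω²(iy) ≤ 0} is exactly the closed interval [ (sqrt(1−c²)/(2·sqrt(2)·(c+1)))·(sqrt(2−E) − sqrt(−E)), (sqrt(1−c²)/(2·sqrt(2)·(c+1)))·(sqrt(2−E) + sqrt(−E)) ]. -/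
/-! With `k = √(1-c²) / (2√2(c+1))`, the endpoints `r₁ = k (√(2-E) - √(-E))` and
`r₂ = k (√(2-E) + √(-E))` satisfy `4(c+1) r₁ r₂ = 1 - c` and `2(c+1)(r₁² + r₂²) = (1-c)(1-E)`,
so by Vieta `Ω²(iy) = (c+1)² / (4y²) · (y² - r₁²)(y² - r₂²)`. For `y > 0` the prefactor is
positive and `(y² - r₁²)(y² - r₂²) ≤ 0` exactly when `r₁ ≤ y ≤ r₂`. -/

open Real Set

section OrderedRing

variable {α : Type*} [CommRing α] [LinearOrder α] [IsStrictOrderedRing α] {a b x : α}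

theorem sub_mul_sub_nonpos_iff_mem_Icc (hab : a ≤ b) : (x - a) * (x - b) ≤ 0 ↔ x ∈ Icc a b := by
  rw [mul_nonpos_iff, mem_Icc, sub_nonneg, sub_nonpos, sub_nonpos, sub_nonneg]
  constructor
  · rintro (⟨hax, hxb⟩ | ⟨hxa, hbx⟩)
    · exact ⟨hax, hxb⟩
    · exact ⟨hab.trans hbx, hxa.trans hab⟩
  · exact Or.inl

theorem sq_sub_sq_mul_sq_sub_sq_nonpos_iff_mem_Icc (ha : 0 ≤ a) (hab : a ≤ b) (hx : 0 < x) :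
    (x ^ 2 - a ^ 2) * (x ^ 2 - b ^ 2) ≤ 0 ↔ x ∈ Icc a b := by
  have hpos : 0 < (x + a) * (x + b) := by
    have hb : 0 ≤ b := ha.trans hab
    positivity
  have hfactor : (x ^ 2 - a ^ 2) * (x ^ 2 - b ^ 2) = (x + a) * (x + b) * ((x - a) * (x - b)) := by
    ring
  rw [hfactor, ← sub_mul_sub_nonpos_iff_mem_Icc hab, ← smul_eq_mul,
    smul_nonpos_iff_nonpos_of_pos_left hpos]

end OrderedRing

theorem omega_sq_imag_eq_of_vieta {c E r₁ r₂ y : ℝ} (hy : y ≠ 0)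
    (hprod : 4 * (c + 1) * (r₁ * r₂) = 1 - c)
    (hsum : 2 * (c + 1) * (r₁ ^ 2 + r₂ ^ 2) = (1 - c) * (1 - E)) :
    (1 / 64) * (-8 * (c ^ 2 - 1) * (E - 1) + (c - 1) ^ 2 / y ^ 2 + 16 * (c + 1) ^ 2 * y ^ 2) =
      (c + 1) ^ 2 / (4 * y ^ 2) * ((y ^ 2 - r₁ ^ 2) * (y ^ 2 - r₂ ^ 2)) := by
  field_simp
  linear_combination
    (-4 * (4 * (c + 1) * (r₁ * r₂) + (1 - c))) * hprod + (32 * (c + 1) * y ^ 2) * hsum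

theorem eight_mul_root_scale_sq {c : ℝ} (hc1 : -1 < c) (hc2 : c ≤ 1) :
    8 * (c + 1) * (√(1 - c ^ 2) / (2 * √2 * (c + 1))) ^ 2 = 1 - c := by
  have hc : c + 1 ≠ 0 := by linarith
  rw [div_pow, mul_pow, mul_pow, sq_sqrt (by nlinarith), sq_sqrt zero_le_two]
  field_simp
  ring

theorem rotational_roots_vieta {c E k s t : ℝ} (hk : 8 * (c + 1) * k ^ 2 = 1 - c)
    (hs : s ^ 2 = 2 - E) (ht : t ^ 2 = -E) :
    4 * (c + 1) * (k * (s - t) * (k * (s + t))) = 1 - c ∧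
      2 * (c + 1) * ((k * (s - t)) ^ 2 + (k * (s + t)) ^ 2) = (1 - c) * (1 - E) :=
  ⟨by linear_combination (4 * (c + 1) * k ^ 2) * (hs - ht) + hk,
    by linear_combination (4 * (c + 1) * k ^ 2) * (hs + ht) + (1 - E) * hk⟩

/-- Subluminal rotational case `−1 < c < 1`, `E < 0`: the set of positive `y` with
`Ω²(iy) ≤ 0` is exactly the closed interval between the two positive imaginary zeros. -/
theorem omega_sq_nonpos_interval_subluminal_rotational (c E : ℝ) (hc1 : -1 < c) (hc2 : c < 1)
    (hE : E < 0) (Omega2i : ℝ → ℝ)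
    (hOmega2i : ∀ y : ℝ, y ≠ 0 → Omega2i y =
      (1 / 64) * (-8 * (c ^ 2 - 1) * (E - 1) + (c - 1) ^ 2 / y ^ 2 + 16 * (c + 1) ^ 2 * y ^ 2)) :
    {y : ℝ | 0 < y ∧ Omega2i y ≤ 0} =
      Set.Icc ((Real.sqrt (1 - c ^ 2) / (2 * Real.sqrt 2 * (c + 1))) *
          (Real.sqrt (2 - E) - Real.sqrt (-E)))
        ((Real.sqrt (1 - c ^ 2) / (2 * Real.sqrt 2 * (c + 1))) *
          (Real.sqrt (2 - E) + Real.sqrt (-E))) := by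
  have hc : 0 < c + 1 := by linarith
  set k := √(1 - c ^ 2) / (2 * √2 * (c + 1))
  have hk : 0 < k := div_pos (sqrt_pos.2 (by nlinarith)) (by positivity)
  have hst : √(-E) < √(2 - E) := sqrt_lt_sqrt (by linarith) (by linarith)
  have hr₁ : 0 < k * (√(2 - E) - √(-E)) := mul_pos hk (by linarith)
  have hr₁₂ : k * (√(2 - E) - √(-E)) ≤ k * (√(2 - E) + √(-E)) := by
    gcongr
    linarith [sqrt_nonneg (-E)]
  obtain ⟨hprod, hsum⟩ := rotational_roots_vieta (eight_mul_root_scale_sq hc1 hc2.le)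
    (sq_sqrt (by linarith : 0 ≤ 2 - E)) (sq_sqrt (by linarith : 0 ≤ -E))
  have hiff : ∀ y, 0 < y →
      (Omega2i y ≤ 0 ↔ y ∈ Icc (k * (√(2 - E) - √(-E))) (k * (√(2 - E) + √(-E)))) := by
    intro y hy
    have hcoef : 0 < (c + 1) ^ 2 / (4 * y ^ 2) := by positivity
    rw [hOmega2i y hy.ne', omega_sq_imag_eq_of_vieta hy.ne' hprod hsum,
      ← smul_eq_mul, smul_nonpos_iff_nonpos_of_pos_left hcoef,
      sq_sub_sq_mul_sq_sub_sq_nonpos_iff_mem_Icc hr₁.le hr₁₂ hy]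
  ext y
  exact ⟨fun ⟨hy, hΩ⟩ => (hiff y hy).1 hΩ,
    fun hy => ⟨hr₁.trans_le hy.1, (hiff y (hr₁.trans_le hy.1)).2 hy⟩⟩
end

section
/- Let c, E ∈ ℝ with c > 1 and E > 2 (superluminal rotational case). Define Ω²(iy) = (1/64)·(−8(c²−1)(E−1) + (c−1)²/y² + 16(c+1)²y²) for real y ≠ 0. Then {y ∈ ℝ : y > 0 and Ω²(iy) ≤ 0} is exactly the closed interval [ (sqrt(c²−1)/(2·sqrt(2)·(c+1)))·(sqrt(E) − sqrt(E−2)), (sqrt(c²−1)/(2·sqrt(2)·(c+1)))·(sqrt(E) + sqrt(E−2)) ]. -/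
/-!
Multiplying `Ω²(iy)` by `64 y²` gives a quadratic in `Y = y²`, namely
`16 (c+1)² Y² - 8 (c²-1)(E-1) Y + (c-1)²`. With `κ = √(c²-1) / (2√2 (c+1))` its roots are
`κ² (√E ∓ √(E-2))²`, as Vieta's formulas confirm: their sum is `8 κ² (E-1)` and their product
`4 κ⁴`. So `Ω²(iy) ≤ 0` exactly when `y²` lies between the roots, i.e. when
`y ∈ [κ (√E - √(E-2)), κ (√E + √(E-2))]`.
-/

open Set

lemma mul_nonpos_iff_of_pos_left {α : Type*} [MulZeroClass α] [Preorder α] [PosMulMono α]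
    [PosMulReflectLE α] {a b : α} (ha : 0 < a) : a * b ≤ 0 ↔ b ≤ 0 := by
  simpa only [mul_zero] using mul_le_mul_iff_right₀ (c := 0) ha

namespace RotationalWave

noncomputable def omegaSqIm (c E y : ℝ) : ℝ :=
  (1 / 64) * (-8 * (c ^ 2 - 1) * (E - 1) + (c - 1) ^ 2 / y ^ 2 + 16 * (c + 1) ^ 2 * y ^ 2)

noncomputable def rootScale (c : ℝ) : ℝ := √(c ^ 2 - 1) / (2 * √2 * (c + 1))

noncomputable def rootLo (c E : ℝ) : ℝ := rootScale c * (√E - √(E - 2))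

noncomputable def rootHi (c E : ℝ) : ℝ := rootScale c * (√E + √(E - 2))

variable {c E : ℝ}

lemma rootScale_pos (hc : 1 < c) : 0 < rootScale c := by
  have : 0 < c ^ 2 - 1 := by nlinarith
  have : 0 < c + 1 := by linarith
  unfold rootScale
  positivity

lemma rootScale_sq (hc : 1 ≤ c ^ 2) : rootScale c ^ 2 = (c ^ 2 - 1) / (8 * (c + 1) ^ 2) := by
  rw [rootScale, div_pow, mul_pow, mul_pow, Real.sq_sqrt (by linarith),
    Real.sq_sqrt zero_le_two]
  ring

lemma rootLo_pos (hc : 1 < c) (hE : 2 ≤ E) : 0 < rootLo c E :=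
  mul_pos (rootScale_pos hc) (sub_pos.2 (Real.sqrt_lt_sqrt (by linarith) (by linarith)))

lemma rootLo_le_rootHi (hc : 1 < c) : rootLo c E ≤ rootHi c E :=
  mul_le_mul_of_nonneg_left (by linarith [Real.sqrt_nonneg (E - 2)]) (rootScale_pos hc).le

lemma rootLo_sq_add_rootHi_sq (hE : 2 ≤ E) :
    rootLo c E ^ 2 + rootHi c E ^ 2 = 4 * rootScale c ^ 2 * (E - 1) := by
  have hsum : rootLo c E ^ 2 + rootHi c E ^ 2 = 2 * rootScale c ^ 2 * (√E ^ 2 + √(E - 2) ^ 2) := by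
    rw [rootLo, rootHi]; ring
  rw [hsum, Real.sq_sqrt (by linarith), Real.sq_sqrt (by linarith)]
  ring

lemma rootLo_mul_rootHi (hE : 2 ≤ E) : rootLo c E * rootHi c E = 2 * rootScale c ^ 2 := by
  have hprod : rootLo c E * rootHi c E = rootScale c ^ 2 * (√E ^ 2 - √(E - 2) ^ 2) := by
    rw [rootLo, rootHi]; ring
  rw [hprod, Real.sq_sqrt (by linarith), Real.sq_sqrt (by linarith)]
  ring

lemma mul_omegaSqIm_eq (hc : 1 < c) (hE : 2 ≤ E) {y : ℝ} (hy : y ≠ 0) :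
    64 * y ^ 2 * omegaSqIm c E y =
      16 * (c + 1) ^ 2 * ((y ^ 2 - rootLo c E ^ 2) * (y ^ 2 - rootHi c E ^ 2)) := by
  have hc1 : c + 1 ≠ 0 := by linarith
  have hκ := rootScale_sq (c := c) (by nlinarith)
  have hsum : 16 * (c + 1) ^ 2 * (rootLo c E ^ 2 + rootHi c E ^ 2) = 8 * (c ^ 2 - 1) * (E - 1) := by
    rw [rootLo_sq_add_rootHi_sq hE, hκ]; field_simp; ring
  have hprod : 16 * (c + 1) ^ 2 * (rootLo c E ^ 2 * rootHi c E ^ 2) = (c - 1) ^ 2 := by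
    rw [← mul_pow, rootLo_mul_rootHi hE, hκ]; field_simp; ring
  have hcancel : (c - 1) ^ 2 / y ^ 2 * y ^ 2 = (c - 1) ^ 2 := by field_simp
  rw [omegaSqIm]
  linear_combination hcancel + y ^ 2 * hsum - hprod

theorem omegaSqIm_nonpos_iff (hc : 1 < c) (hE : 2 ≤ E) {y : ℝ} (hy : 0 < y) :
    omegaSqIm c E y ≤ 0 ↔ y ∈ Icc (rootLo c E) (rootHi c E) := by
  have hlo := (rootLo_pos hc hE).le
  have hlohi := rootLo_le_rootHi (E := E) hc
  have hc1 : 0 < c + 1 := by linarith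
  calc omegaSqIm c E y ≤ 0 ↔ 64 * y ^ 2 * omegaSqIm c E y ≤ 0 :=
        (mul_nonpos_iff_of_pos_left (by positivity)).symm
    _ ↔ 16 * (c + 1) ^ 2 * ((y ^ 2 - rootLo c E ^ 2) * (y ^ 2 - rootHi c E ^ 2)) ≤ 0 := by
        rw [mul_omegaSqIm_eq hc hE hy.ne']
    _ ↔ (y ^ 2 - rootLo c E ^ 2) * (y ^ 2 - rootHi c E ^ 2) ≤ 0 :=
        mul_nonpos_iff_of_pos_left (by positivity)
    _ ↔ rootLo c E ^ 2 ≤ y ^ 2 ∧ y ^ 2 ≤ rootHi c E ^ 2 :=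
        sub_mul_sub_nonpos_iff _ (pow_le_pow_left₀ hlo hlohi 2)
    _ ↔ y ∈ Icc (rootLo c E) (rootHi c E) := by
        rw [sq_le_sq₀ hlo hy.le, sq_le_sq₀ hy.le (hlo.trans hlohi), mem_Icc]

end RotationalWave

open RotationalWave

/-- Superluminal rotational case `c > 1`, `E > 2`: the set of positive `y` with
`Ω²(iy) ≤ 0` is exactly the closed interval between the two positive imaginary zeros. -/
theorem omega_sq_nonpos_interval_superluminal_rotational (c E : ℝ) (hc : c > 1) (hE : E > 2)
    (Omega2i : ℝ → ℝ)
    (hOmega2i : ∀ y : ℝ, y ≠ 0 → Omega2i y =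
      (1 / 64) * (-8 * (c ^ 2 - 1) * (E - 1) + (c - 1) ^ 2 / y ^ 2 + 16 * (c + 1) ^ 2 * y ^ 2)) :
    {y : ℝ | 0 < y ∧ Omega2i y ≤ 0} =
      Set.Icc ((Real.sqrt (c ^ 2 - 1) / (2 * Real.sqrt 2 * (c + 1))) *
          (Real.sqrt E - Real.sqrt (E - 2)))
        ((Real.sqrt (c ^ 2 - 1) / (2 * Real.sqrt 2 * (c + 1))) *
          (Real.sqrt E + Real.sqrt (E - 2))) := by
  ext y
  change 0 < y ∧ Omega2i y ≤ 0 ↔ y ∈ Icc (rootLo c E) (rootHi c E)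
  constructor
  · rintro ⟨hy, hΩ⟩
    rw [hOmega2i y hy.ne'] at hΩ
    exact (omegaSqIm_nonpos_iff hc hE.le hy).1 hΩ
  · intro hmem
    have hy : 0 < y := (rootLo_pos hc hE.le).trans_le hmem.1
    exact ⟨hy, (hOmega2i y hy.ne').trans_le ((omegaSqIm_nonpos_iff hc hE.le hy).2 hmem)⟩
end
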